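/- arXiv:1708.06061 — 2 statements merged into one kernel-verified Lean document; each statement's English description precedes it below -/
import Mathlib

section
/- With the bilinear form ⟨u,v⟩ = uᵀ J v on ℝ^4, J = [[-2,2,2,4],[2,-2,2,4],[2,2,-2,0],[4,4,0,0]], and n₁ = (-1,1,0,1), the reflection R_{n₁}(x) = x - 2(⟨n₁,x⟩/⟨n₁,n₁⟩)n₁ maps ℤ^4 into ℤ^4. -/
open Matrix

/-- The reflection `R_{n₁}` with `n₁ = (-1,1,0,1)` with respect to the form
`⟨u,v⟩ = uᵀ J v` maps `ℤ^4` into `ℤ^4`. -/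
theorem reflection_n1_integral
    (J : Matrix (Fin 4) (Fin 4) ℝ)
    (hJ : J = !![-2, 2, 2, 4; 2, -2, 2, 4; 2, 2, -2, 0; 4, 4, 0, 0])
    (n₁ : Fin 4 → ℝ) (hn₁ : n₁ = ![-1, 1, 0, 1])
    (R : (Fin 4 → ℝ) → (Fin 4 → ℝ))
    (hR : ∀ x, R x = x - (2 * (n₁ ⬝ᵥ J.mulVec x) / (n₁ ⬝ᵥ J.mulVec n₁)) • n₁) :
    ∀ v : Fin 4 → ℤ, ∃ w : Fin 4 → ℤ,
      R (fun i => (v i : ℝ)) = fun i => (w i : ℝ) := by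
  intro v
  refine ⟨![v 0 - 2 * v 0, v 1 + 2 * v 0, v 2, v 3 + 2 * v 0], ?_⟩
  funext i
  fin_cases i <;>
    simp [hR, hJ, hn₁, dotProduct, mulVec, Fin.sum_univ_succ] <;>
    push_cast <;> ring
end

section
/- Let V be a Lorentzian space (signature (1,k)) with form ⟨·,·⟩, let E ∈ V with ⟨E,E⟩ = 0 and E ≠ 0, and let n ∈ V with ⟨n,n⟩ < 0 and ⟨n,E⟩ ≠ 0. Define P = E - (2⟨n,E⟩/⟨n,n⟩)n. Then ⟨P,P⟩ = 0 and for any Q with ⟨Q,Q⟩ = 0, ⟨n,Q⟩ = 0, ⟨Q,E⟩ ≠ 0: 2⟨P,Q⟩/((⟨P,E⟩)(⟨Q,E⟩)) = -⟨n,n⟩/⟨n,E⟩². -/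
/-- The curvature lemma: if `E` is isotropic, `⟨n,n⟩ < 0`, `⟨n,E⟩ ≠ 0`, and
`P = E - (2⟨n,E⟩/⟨n,n⟩) n`, then `P` is isotropic and for any isotropic `Q` on the
hyperplane of `n` with `⟨Q,E⟩ ≠ 0` we have
`2⟨P,Q⟩/(⟨P,E⟩⟨Q,E⟩) = -⟨n,n⟩/⟨n,E⟩²`. -/
theorem curvature_lemma
    {V : Type*} [AddCommGroup V] [Module ℝ V]
    (B : LinearMap.BilinForm ℝ V) (hB : B.IsSymm)
    (E : V) (hE : B E E = 0) (hE0 : E ≠ 0)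
    (n : V) (hn : B n n < 0) (hnE : B n E ≠ 0)
    (P : V) (hP : P = E - (2 * (B n E) / (B n n)) • n) :
    B P P = 0 ∧
    ∀ Q : V, B Q Q = 0 → B n Q = 0 → B Q E ≠ 0 →
      2 * (B P Q) / ((B P E) * (B Q E)) = -(B n n) / (B n E) ^ 2 := by
  have hnn : B n n ≠ 0 := ne_of_lt hn
  have hEn : B E n = B n E := by exact (hB.eq n E).symm
  constructor
  · subst hP
    simp only [map_sub, map_smul, LinearMap.sub_apply, LinearMap.smul_apply,
      smul_eq_mul, hE, hEn]
    field_simp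
    ring
  · intro Q hQ hnQ hQE
    have hEQ : B E Q = B Q E := by exact (hB.eq Q E).symm
    subst hP
    simp only [map_sub, map_smul, LinearMap.sub_apply, LinearMap.smul_apply,
      smul_eq_mul, hE, hEn, hnQ, hEQ, mul_zero, sub_zero]
    have hden : (0 - 2 * B n E / B n n * B n E) * B Q E ≠ 0 := by
      apply mul_ne_zero _ hQE
      rw [zero_sub, neg_ne_zero]
      exact mul_ne_zero (div_ne_zero (by positivity) hnn) hnE
    rw [div_eq_div_iff hden (pow_ne_zero 2 hnE)]
    field_simp
    ring
end
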